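/- arXiv:2303.10509 — 3 statements merged into one kernel-verified Lean document; each statement's English description precedes it below -/
import Mathlib

section
/- The mean of the assorter h over all ballots exceeds 1/2 if and only if s(i,j) > s(c,w). -/
/-- A ballot `b` (a duplicate-free list of candidates) prefers `i` over `j` if
`i` appears before `j` on `b`, or `i` appears on `b` and `j` does not. -/
def Prefers {C : Type*} [DecidableEq C] (b : List C) (i j : C) : Prop :=
  i ∈ b ∧ (j ∉ b ∨ b.idxOf i < b.idxOf j)

instance {C : Type*} [DecidableEq C] (b : List C) (i j : C) :
    Decidable (Prefers b i j) :=
  inferInstanceAs (Decidable (_ ∧ _))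

/-- `T B i j` is the number of ballots in `B` preferring `i` over `j`. -/
def T {C : Type*} [DecidableEq C] (B : Multiset (List C)) (i j : C) : ℕ :=
  (B.filter fun b => Prefers b i j).card

/-- The pairwise score `s(i,j) = T(i≻j) - T(j≻i)`, as an integer. -/
def score {C : Type*} [DecidableEq C] (B : Multiset (List C)) (i j : C) : ℤ :=
  (T B i j : ℤ) - (T B j i : ℤ)

/-- The indicator (as a rational) of whether ballot `b` prefers `x` over `y`. -/
def ind {C : Type*} [DecidableEq C] (b : List C) (x y : C) : ℚ :=
  if Prefers b x y then 1 else 0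

/-! Since `h = 1/2 + g/4`, the mean of `h` exceeds `1/2` iff `∑ g > 0`; and summing each
indicator over `B` gives a tally `T`, so `∑ g = s(i,j) - s(c,w)`. -/

/-- For `B = 0` both sides are false, the mean being `0 / 0 = 0`. -/
lemma sum_map_div_card_gt_half_iff {α : Type*} (B : Multiset α) (g : α → ℚ) :
    (B.map fun b => (g b + 2) / 4).sum / (Multiset.card B : ℚ) > 1 / 2 ↔ 0 < (B.map g).sum := by
  rcases eq_or_ne B 0 with rfl | hB
  · norm_num
  have hcard : (0 : ℚ) < Multiset.card B := by exact_mod_cast Multiset.card_pos.mpr hB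
  rw [Multiset.sum_map_div, Multiset.sum_map_add, Multiset.map_const', Multiset.sum_replicate,
    nsmul_eq_mul, gt_iff_lt, lt_div_iff₀ hcard]
  constructor <;> intro h <;> linarith

section

variable {C : Type*} [DecidableEq C]

lemma sum_map_ind_eq_T (B : Multiset (List C)) (x y : C) :
    (B.map fun b => ind b x y).sum = T B x y := by
  induction B using Multiset.induction with
  | empty => simp [T]
  | cons b B ih =>
    rw [Multiset.map_cons, Multiset.sum_cons, ih, T, T, Multiset.filter_cons, ind]
    split_ifs <;> simp [add_comm]

lemma sum_map_ind_sub_eq_score_sub (B : Multiset (List C)) (i j c w : C) :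
    (B.map fun b => ind b i j + ind b w c - ind b c w - ind b j i).sum
      = ((score B i j - score B c w : ℤ) : ℚ) := by
  simp only [Multiset.sum_map_sub, Multiset.sum_map_add, sum_map_ind_eq_T, score]
  push_cast
  ring

end

theorem assorter_mean_gt_half_iff_general {C : Type*} [DecidableEq C]
    (B : Multiset (List C)) (i j c w : C) :
    (B.map fun b => ((ind b i j + ind b w c - ind b c w - ind b j i) + 2) / 4).sum
        / (Multiset.card B : ℚ) > 1 / 2
      ↔ score B i j > score B c w := by
  rw [sum_map_div_card_gt_half_iff, sum_map_ind_sub_eq_score_sub, Int.cast_pos, sub_pos]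

theorem assorter_mean_gt_half_iff {C : Type*} [DecidableEq C]
    (B : Multiset (List C)) (hB : B ≠ 0) (i j c w : C) (hij : i ≠ j) (hcw : c ≠ w) :
    (B.map fun b => ((ind b i j + ind b w c - ind b c w - ind b j i) + 2) / 4).sum
        / (Multiset.card B : ℚ) > 1 / 2
      ↔ score B i j > score B c w :=
  assorter_mean_gt_half_iff_general B i j c w
end

section
/- If a Condorcet winner w exists, then the graph built by the Ranked Pairs procedure never contains an edge or path into w, and consequently w is the Ranked Pairs winner. -/
open Classical in
/-- One step of the Ranked Pairs procedure: add the edge `p.1 → p.2` to `G`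
unless `G` already contains a directed path from `p.2` to `p.1`. -/
noncomputable def rpStep {C : Type*} (G : C → C → Prop) (p : C × C) : C → C → Prop :=
  if Relation.ReflTransGen G p.2 p.1 then G
  else fun x y => G x y ∨ (x = p.1 ∧ y = p.2)

/-- The digraph built by the Ranked Pairs procedure after processing the
given list of pairs, starting from the empty digraph. -/
noncomputable def rpBuild {C : Type*} (pairs : List (C × C)) : C → C → Prop :=
  pairs.foldl rpStep (fun _ _ => False)


/-!
Ranked Pairs only ever adds edges `i → j` with `s(i,j) > 0`. A Condorcet winner `w` beats every
other candidate, so no pair `(c, w)` is ever processed and `w` never acquires an incoming edge,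
hence no path into `w`. Consequently, when the pair `(w, c)` is processed there is no path from `c`
back to `w`, so the edge `w → c` is added.
-/

theorem score_swap {C : Type*} [DecidableEq C] (B : Multiset (List C)) (i j : C) :
    score B j i = -score B i j := by
  unfold score
  ring

theorem score_self {C : Type*} [DecidableEq C] (B : Multiset (List C)) (i : C) :
    score B i i = 0 :=
  sub_self _

theorem Relation.ReflTransGen.eq_of_forall_not_rel {α : Type*} {r : α → α → Prop} {a b : α}
    (hb : ∀ c, ¬ r c b) (h : Relation.ReflTransGen r a b) : a = b := by
  rcases h.cases_tail with rfl | ⟨c, -, hcb⟩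
  · rfl
  · exact (hb c hcb).elim

section RankedPairs

variable {C : Type*}

theorem le_rpStep (G : C → C → Prop) (p : C × C) : G ≤ rpStep G p := by
  intro x y hxy
  unfold rpStep
  split_ifs
  exacts [hxy, Or.inl hxy]

theorem le_foldl_rpStep (l : List (C × C)) (G : C → C → Prop) : G ≤ l.foldl rpStep G := by
  induction l generalizing G with
  | nil => exact le_rfl
  | cons p l ih => exact (le_rpStep G p).trans (ih _)

theorem rel_or_mem_of_foldl_rpStep (l : List (C × C)) (G : C → C → Prop) {x y : C}
    (h : l.foldl rpStep G x y) : G x y ∨ (x, y) ∈ l := by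
  induction l generalizing G with
  | nil => exact Or.inl h
  | cons p l ih =>
    rcases ih _ h with hstep | hmem
    · unfold rpStep at hstep
      split_ifs at hstep
      · exact Or.inl hstep
      · rcases hstep with hG | ⟨rfl, rfl⟩
        · exact Or.inl hG
        · exact Or.inr List.mem_cons_self
    · exact Or.inr (List.mem_cons_of_mem _ hmem)

theorem mem_of_rpBuild {pairs : List (C × C)} {x y : C} (h : rpBuild pairs x y) :
    (x, y) ∈ pairs :=
  (rel_or_mem_of_foldl_rpStep pairs _ h).resolve_left id

/-- Edges are never removed, so a path that blocked `(a, b)` when it was processed survives to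
the end. -/
theorem rpBuild_of_mem_of_not_reflTransGen {pairs : List (C × C)} {a b : C}
    (hmem : (a, b) ∈ pairs) (hpath : ¬ Relation.ReflTransGen (rpBuild pairs) b a) :
    rpBuild pairs a b := by
  obtain ⟨l₁, l₂, rfl⟩ := List.append_of_mem hmem
  set G := l₁.foldl rpStep (fun _ _ => False)
  have hfinal : rpBuild (l₁ ++ (a, b) :: l₂) = l₂.foldl rpStep (rpStep G (a, b)) := by
    rw [rpBuild, List.foldl_append, List.foldl_cons]
  rw [hfinal] at hpath ⊢
  have hG : G ≤ l₂.foldl rpStep (rpStep G (a, b)) :=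
    (le_rpStep G _).trans (le_foldl_rpStep l₂ _)
  have hGpath : ¬ Relation.ReflTransGen G b a := fun h =>
    hpath (Relation.ReflTransGen.mono hG _ _ h)
  apply le_foldl_rpStep
  rw [rpStep, if_neg hGpath]
  exact Or.inr ⟨rfl, rfl⟩

end RankedPairs

theorem condorcet_winner_is_ranked_pairs_winner_general {C : Type*} [DecidableEq C]
    (B : Multiset (List C)) (w : C)
    (hw : ∀ c : C, c ≠ w → score B w c > 0)
    (pairs : List (C × C))
    (hpos : ∀ p ∈ pairs, score B p.1 p.2 > 0)
    (hall : ∀ i j : C, score B i j > 0 → (i, j) ∈ pairs) :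
    (∀ c : C, ¬ rpBuild pairs c w) ∧
    (∀ c : C, c ≠ w → ¬ Relation.ReflTransGen (rpBuild pairs) c w) ∧
    (∀ c : C, c ≠ w → Relation.ReflTransGen (rpBuild pairs) w c) := by
  have hno_pair : ∀ c, (c, w) ∉ pairs := by
    intro c hc
    have hcw : score B c w > 0 := hpos _ hc
    have hne : c ≠ w := by rintro rfl; simp [score_self] at hcw
    have hwc := hw c hne
    rw [score_swap] at hwc
    omega
  have hno_edge : ∀ c, ¬ rpBuild pairs c w := fun c h => hno_pair c (mem_of_rpBuild h)
  have hno_path : ∀ c, c ≠ w → ¬ Relation.ReflTransGen (rpBuild pairs) c w :=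
    fun c hc h => hc (h.eq_of_forall_not_rel hno_edge)
  exact ⟨hno_edge, hno_path, fun c hc =>
    .single (rpBuild_of_mem_of_not_reflTransGen (hall w c (hw c hc)) (hno_path c hc))⟩

theorem condorcet_winner_is_ranked_pairs_winner {C : Type*} [DecidableEq C]
    (B : Multiset (List C)) (w : C)
    (hw : ∀ c : C, c ≠ w → score B w c > 0)
    (pairs : List (C × C))
    (hpos : ∀ p ∈ pairs, score B p.1 p.2 > 0)
    (hall : ∀ i j : C, score B i j > 0 → (i, j) ∈ pairs)
    (hsorted : pairs.Pairwise fun p q => score B p.1 p.2 > score B q.1 q.2) :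
    (∀ c : C, ¬ rpBuild pairs c w) ∧
    (∀ c : C, c ≠ w → ¬ Relation.ReflTransGen (rpBuild pairs) c w) ∧
    (∀ c : C, c ≠ w → Relation.ReflTransGen (rpBuild pairs) w c) :=
  condorcet_winner_is_ranked_pairs_winner_general B w hw pairs hpos hall
end

section
/- If every pairwise contest is decisive (s(i,j) ≠ 0 for all distinct i,j), then any two sets satisfying the Smith dominance property are nested by inclusion; hence the minimal such set (the Smith set) is unique. -/
/-- A set `S` of candidates is dominant if it is nonempty and every candidate
in `S` pairwise defeats every candidate outside `S`. -/
def Dominant {C : Type*} [DecidableEq C] [Fintype C] (B : Multiset (List C))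
    (S : Finset C) : Prop :=
  S.Nonempty ∧ ∀ c ∈ S, ∀ c' ∉ S, score B c c' > 0

theorem score_eq_neg_score {C : Type*} [DecidableEq C] (B : Multiset (List C)) (i j : C) :
    score B i j = -score B j i := by
  unfold score
  ring

namespace Dominant

variable {C : Type*} [DecidableEq C] [Fintype C] {B : Multiset (List C)} {S S' : Finset C}

theorem subset_or_subset (hS : Dominant B S) (hS' : Dominant B S') : S ⊆ S' ∨ S' ⊆ S := by
  by_contra! h
  obtain ⟨a, haS, haS'⟩ := Finset.not_subset.mp h.1
  obtain ⟨b, hbS', hbS⟩ := Finset.not_subset.mp h.2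
  have hab := hS.2 a haS b hbS
  have hba := hS'.2 b hbS' a haS'
  rw [score_eq_neg_score] at hab
  omega

theorem eq_of_subset_of_minimal (hS : Dominant B S) (hSS' : S ⊆ S')
    (hmin : ∀ T : Finset C, Dominant B T → ¬ T ⊂ S') : S = S' := by
  by_contra hne
  exact hmin S hS (Finset.ssubset_iff_subset_ne.mpr ⟨hSS', hne⟩)

end Dominant

theorem dominant_sets_nested_and_smith_unique_general {C : Type*} [DecidableEq C] [Fintype C]
    (B : Multiset (List C))
    (S S' : Finset C) (hS : Dominant B S) (hS' : Dominant B S') :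
    (S ⊆ S' ∨ S' ⊆ S) ∧
    ((∀ T : Finset C, Dominant B T → ¬ T ⊂ S) →
     (∀ T : Finset C, Dominant B T → ¬ T ⊂ S') → S = S') := by
  refine ⟨hS.subset_or_subset hS', fun hminS hminS' => ?_⟩
  rcases hS.subset_or_subset hS' with hSS' | hS'S
  · exact hS.eq_of_subset_of_minimal hSS' hminS'
  · exact (hS'.eq_of_subset_of_minimal hS'S hminS).symm

theorem dominant_sets_nested_and_smith_unique {C : Type*} [DecidableEq C] [Fintype C]
    (B : Multiset (List C))
    (hdec : ∀ i j : C, i ≠ j → score B i j ≠ 0)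
    (S S' : Finset C) (hS : Dominant B S) (hS' : Dominant B S') :
    (S ⊆ S' ∨ S' ⊆ S) ∧
    ((∀ T : Finset C, Dominant B T → ¬ T ⊂ S) →
     (∀ T : Finset C, Dominant B T → ¬ T ⊂ S') → S = S') :=
  dominant_sets_nested_and_smith_unique_general B S S' hS hS'
end
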